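/- arXiv:1805.04065 — 6 statements merged into one kernel-verified Lean document; each statement's English description precedes it below -/
import Mathlib

section
/- For a set partition π of {1,...,n}, the number of singular pairs equals 2(dim(π) − d(π)) − crs(π), where Sing(π) is the complement of the regular pairs; i.e., |Sing(π)| = 2·dim(π) − 2·d(π) − crs(π). -/
open scoped Classical

noncomputable section

/-- The set of arcs of a set partition `π` of `{1, ..., n}`: pairs `(i, j)` with `i < j`
lying in the same block, with no element of that block strictly between them. -/
def arcSet (n : ℕ) (π : Finpartition (Finset.Icc 1 n)) : Finset (ℕ × ℕ) :=
  (Finset.Icc 1 n ×ˢ Finset.Icc 1 n).filter fun p =>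
    ∃ B ∈ π.parts, p.1 ∈ B ∧ p.2 ∈ B ∧ p.1 < p.2 ∧ ∀ k ∈ B, ¬(p.1 < k ∧ k < p.2)

/-- `d(π)`, the number of arcs of `π`. -/
def numArcs (n : ℕ) (π : Finpartition (Finset.Icc 1 n)) : ℕ := (arcSet n π).card

/-- `dim(π) = Σ_{(i,j) ∈ D(π)} (j - i)`. -/
def dimSP (n : ℕ) (π : Finpartition (Finset.Icc 1 n)) : ℕ :=
  ∑ p ∈ arcSet n π, (p.2 - p.1)

/-- `crs(π)`, the number of crossings: unordered pairs of arcs `{(i,j),(k,l)}` with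
`i < k < j < l`, counted as ordered pairs with `i < k`. -/
def crsSP (n : ℕ) (π : Finpartition (Finset.Icc 1 n)) : ℕ :=
  ((arcSet n π ×ˢ arcSet n π).filter fun q =>
    q.1.1 < q.2.1 ∧ q.2.1 < q.1.2 ∧ q.1.2 < q.2.2).card

/-- The singular pairs relative to an arc set `D`: pairs `(i,j)`, `1 ≤ i < j ≤ n`, such that
there is `k < i` with `(k,j) ∈ D` or `l > j` with `(i,l) ∈ D`. -/
def singOf (n : ℕ) (D : Finset (ℕ × ℕ)) : Finset (ℕ × ℕ) :=
  ((Finset.Icc 1 n) ×ˢ (Finset.Icc 1 n)).filter fun p =>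
    p.1 < p.2 ∧ ((∃ k < p.1, (k, p.2) ∈ D) ∨ (∃ l > p.2, (p.1, l) ∈ D))

/-- `Sing(π)`, the singular pairs of the set partition `π` (the complement of the
`π`-regular pairs). -/
def singSP (n : ℕ) (π : Finpartition (Finset.Icc 1 n)) : Finset (ℕ × ℕ) :=
  singOf n (arcSet n π)

/-!
Write `Sing(π) = L ∪ R`, where `L` collects the pairs `(i, j)` with `k < i < j` for an arc `(k, j)`
and `R` those with `i < j < l` for an arc `(i, l)`. Every element is the right end of at most one
arc and the left end of at most one arc, so an arc `(a, b)` contributes exactly its `b - a - 1`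
interior points to each of `L` and `R`, giving `|L| = |R| = dim(π) - d(π)`. A pair in `L ∩ R`
comes from arcs `(k, j)` and `(i, l)` with `k < i < j < l`, i.e. from a crossing, and the crossing
is recovered from the pair by the same uniqueness of arcs at an endpoint.
-/

open Finset

section ArcFamily

variable {n : ℕ} {D : Finset (ℕ × ℕ)}

def coveredLeft (D : Finset (ℕ × ℕ)) : Finset (ℕ × ℕ) :=
  D.biUnion fun a => (Ioo a.1 a.2).image fun i => (i, a.2)

def coveredRight (D : Finset (ℕ × ℕ)) : Finset (ℕ × ℕ) :=
  D.biUnion fun a => (Ioo a.1 a.2).image fun j => (a.1, j)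

def crossings (D : Finset (ℕ × ℕ)) : Finset ((ℕ × ℕ) × (ℕ × ℕ)) :=
  (D ×ˢ D).filter fun q => q.1.1 < q.2.1 ∧ q.2.1 < q.1.2 ∧ q.1.2 < q.2.2

lemma mem_coveredLeft {p : ℕ × ℕ} :
    p ∈ coveredLeft D ↔ p.1 < p.2 ∧ ∃ k < p.1, (k, p.2) ∈ D := by
  simp only [coveredLeft, mem_biUnion, mem_image, mem_Ioo]
  constructor
  · rintro ⟨a, ha, i, ⟨hai, hia⟩, rfl⟩
    exact ⟨hia, a.1, hai, ha⟩
  · rintro ⟨hlt, k, hk, hkD⟩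
    exact ⟨(k, p.2), hkD, p.1, ⟨hk, hlt⟩, rfl⟩

lemma mem_coveredRight {p : ℕ × ℕ} :
    p ∈ coveredRight D ↔ p.1 < p.2 ∧ ∃ l > p.2, (p.1, l) ∈ D := by
  simp only [coveredRight, mem_biUnion, mem_image, mem_Ioo]
  constructor
  · rintro ⟨a, ha, j, ⟨haj, hja⟩, rfl⟩
    exact ⟨haj, a.2, hja, ha⟩
  · rintro ⟨hlt, l, hl, hlD⟩
    exact ⟨(p.1, l), hlD, p.2, ⟨hlt, hl⟩, rfl⟩

lemma singOf_eq_coveredLeft_union_coveredRight (hD : D ⊆ Icc 1 n ×ˢ Icc 1 n) :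
    singOf n D = coveredLeft D ∪ coveredRight D := by
  ext p
  simp only [singOf, mem_filter, mem_union, mem_coveredLeft, mem_coveredRight, mem_product,
    mem_Icc]
  constructor
  · rintro ⟨-, hlt, h | h⟩
    exacts [.inl ⟨hlt, h⟩, .inr ⟨hlt, h⟩]
  · rintro (⟨hlt, k, hk, hkD⟩ | ⟨hlt, l, hl, hlD⟩)
    · have := mem_product.1 (hD hkD)
      simp only [mem_Icc] at this
      exact ⟨⟨⟨by omega, by omega⟩, this.2⟩, hlt, .inl ⟨k, hk, hkD⟩⟩
    · have := mem_product.1 (hD hlD)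
      simp only [mem_Icc] at this
      exact ⟨⟨this.1, ⟨by omega, by omega⟩⟩, hlt, .inr ⟨l, hl, hlD⟩⟩

lemma card_coveredLeft (hsnd : Set.InjOn Prod.snd (D : Set (ℕ × ℕ))) :
    #(coveredLeft D) = ∑ a ∈ D, (a.2 - a.1 - 1) := by
  rw [coveredLeft, card_biUnion]
  · refine sum_congr rfl fun a _ => ?_
    rw [card_image_of_injective _ fun x y h => (Prod.mk.inj h).1, Nat.card_Ioo]
  · intro a ha b hb hab
    simp only [Function.onFun, disjoint_left, mem_image]
    rintro _ ⟨i, -, rfl⟩ ⟨i', -, he⟩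
    exact hab (hsnd ha hb (Prod.mk.inj he).2.symm)

lemma card_coveredRight (hfst : Set.InjOn Prod.fst (D : Set (ℕ × ℕ))) :
    #(coveredRight D) = ∑ a ∈ D, (a.2 - a.1 - 1) := by
  rw [coveredRight, card_biUnion]
  · refine sum_congr rfl fun a _ => ?_
    rw [card_image_of_injective _ fun x y h => (Prod.mk.inj h).2, Nat.card_Ioo]
  · intro a ha b hb hab
    simp only [Function.onFun, disjoint_left, mem_image]
    rintro _ ⟨j, -, rfl⟩ ⟨j', -, he⟩
    exact hab (hfst ha hb (Prod.mk.inj he).1.symm)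

lemma card_coveredLeft_inter_coveredRight (hfst : Set.InjOn Prod.fst (D : Set (ℕ × ℕ)))
    (hsnd : Set.InjOn Prod.snd (D : Set (ℕ × ℕ))) :
    #(coveredLeft D ∩ coveredRight D) = #(crossings D) := by
  symm
  apply card_bij (fun q _ => (q.2.1, q.1.2))
  · rintro ⟨⟨k, j⟩, ⟨i, l⟩⟩ hq
    simp only [crossings, mem_filter, mem_product] at hq
    obtain ⟨⟨hkj, hil⟩, hki, hij, hjl⟩ := hq
    exact mem_inter.2 ⟨mem_coveredLeft.2 ⟨hij, k, hki, hkj⟩, mem_coveredRight.2 ⟨hij, l, hjl, hil⟩⟩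
  · rintro ⟨⟨k, j⟩, ⟨i, l⟩⟩ hq ⟨⟨k', j'⟩, ⟨i', l'⟩⟩ hq' he
    simp only [crossings, mem_filter, mem_product] at hq hq'
    obtain ⟨rfl, rfl⟩ := Prod.mk.inj he
    have hk : (k, j) = (k', j) := hsnd hq.1.1 hq'.1.1 rfl
    have hl : (i, l) = (i, l') := hfst hq.1.2 hq'.1.2 rfl
    rw [hk, hl]
  · rintro p hp
    obtain ⟨⟨hlt, k, hk, hkD⟩, -, l, hl, hlD⟩ :=
      And.imp mem_coveredLeft.1 mem_coveredRight.1 (mem_inter.1 hp)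
    exact ⟨((k, p.2), (p.1, l)), mem_filter.2 ⟨mem_product.2 ⟨hkD, hlD⟩, hk, hlt, hl⟩, rfl⟩

lemma card_singOf_add_card_crossings (hD : D ⊆ Icc 1 n ×ˢ Icc 1 n)
    (hfst : Set.InjOn Prod.fst (D : Set (ℕ × ℕ))) (hsnd : Set.InjOn Prod.snd (D : Set (ℕ × ℕ))) :
    #(singOf n D) + #(crossings D) = 2 * ∑ a ∈ D, (a.2 - a.1 - 1) := by
  rw [singOf_eq_coveredLeft_union_coveredRight hD, ← card_coveredLeft_inter_coveredRight hfst hsnd,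
    card_union_add_card_inter, card_coveredLeft hsnd, card_coveredRight hfst, two_mul]

end ArcFamily

section SetPartition

variable {n : ℕ} {π : Finpartition (Icc 1 n)}

lemma arcSet_subset : arcSet n π ⊆ Icc 1 n ×ˢ Icc 1 n :=
  filter_subset _ _

lemma fst_lt_snd_of_mem_arcSet {p : ℕ × ℕ} (hp : p ∈ arcSet n π) : p.1 < p.2 := by
  obtain ⟨-, B, -, -, -, hlt, -⟩ := mem_filter.1 hp
  exact hlt

lemma not_mem_Ioo_of_mem_arcSet {i j k : ℕ} (h : (i, j) ∈ arcSet n π) {B : Finset ℕ}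
    (hB : B ∈ π.parts) (hij : i ∈ B ∨ j ∈ B) (hk : k ∈ B) : ¬(i < k ∧ k < j) := by
  obtain ⟨-, B', hB', hi, hj, -, hgap⟩ := mem_filter.1 h
  obtain rfl : B' = B := by
    rcases hij with hij | hij
    exacts [π.eq_of_mem_parts hB' hB hi hij, π.eq_of_mem_parts hB' hB hj hij]
  exact hgap k hk

lemma injOn_fst_arcSet : Set.InjOn Prod.fst (arcSet n π : Set (ℕ × ℕ)) := by
  rintro ⟨i, l⟩ h ⟨_, l'⟩ h' (rfl : i = _)
  obtain ⟨-, B, hB, hi, hl, hil, -⟩ := mem_filter.1 h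
  obtain ⟨-, B', hB', hi', hl', hil', -⟩ := mem_filter.1 h'
  obtain rfl : B' = B := π.eq_of_mem_parts hB' hB hi' hi
  rcases lt_trichotomy l l' with hc | rfl | hc
  · exact absurd ⟨hil, hc⟩ (not_mem_Ioo_of_mem_arcSet h' hB (.inl hi) hl)
  · rfl
  · exact absurd ⟨hil', hc⟩ (not_mem_Ioo_of_mem_arcSet h hB (.inl hi) hl')

lemma injOn_snd_arcSet : Set.InjOn Prod.snd (arcSet n π : Set (ℕ × ℕ)) := by
  rintro ⟨k, j⟩ h ⟨k', _⟩ h' (rfl : j = _)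
  obtain ⟨-, B, hB, hk, hj, hkj, -⟩ := mem_filter.1 h
  obtain ⟨-, B', hB', hk', hj', hkj', -⟩ := mem_filter.1 h'
  obtain rfl : B' = B := π.eq_of_mem_parts hB' hB hj' hj
  rcases lt_trichotomy k k' with hc | rfl | hc
  · exact absurd ⟨hc, hkj'⟩ (not_mem_Ioo_of_mem_arcSet h hB (.inr hj) hk')
  · rfl
  · exact absurd ⟨hc, hkj⟩ (not_mem_Ioo_of_mem_arcSet h' hB (.inr hj) hk)

lemma sum_arcSet_sub_one :
    ((∑ a ∈ arcSet n π, (a.2 - a.1 - 1) : ℕ) : ℤ) = dimSP n π - numArcs n π := by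
  rw [dimSP, numArcs, card_eq_sum_ones, Nat.cast_sum, Nat.cast_sum, Nat.cast_sum,
    ← sum_sub_distrib]
  refine sum_congr rfl fun a ha => ?_
  have := fst_lt_snd_of_mem_arcSet ha
  omega

end SetPartition

/-- For a set partition `π` of `{1,...,n}`,
`|Sing(π)| = 2·dim(π) − 2·d(π) − crs(π)`. -/
theorem stmt0 (n : ℕ) (π : Finpartition (Finset.Icc 1 n)) :
    ((singSP n π).card : ℤ) =
      2 * (dimSP n π : ℤ) - 2 * (numArcs n π : ℤ) - (crsSP n π : ℤ) := by
  have key := congrArg (Nat.cast : ℕ → ℤ) <|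
    card_singOf_add_card_crossings arcSet_subset injOn_fst_arcSet (injOn_snd_arcSet (π := π))
  rw [Nat.cast_add, Nat.cast_mul, Nat.cast_ofNat, sum_arcSet_sub_one] at key
  have hcrs : crsSP n π = #(crossings (arcSet n π)) := rfl
  rw [singSP, hcrs]
  linarith

end
end

section
/- Superinduction satisfies Frobenius reciprocity: if H ≤ G are finite groups, G carries a supercharacter theory, φ: H → ℂ is any function and ψ: G → ℂ is a superclass function, then ⟨SInd_H^G(φ), ψ⟩ = ⟨φ, Res_H^G(ψ)⟩. -/
open scoped Classical

noncomputable section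

/-- The Frobenius inner product of two functions on a finite group. -/
def innerChar (G : Type) [Group G] [Fintype G] (f₁ f₂ : G → ℂ) : ℂ :=
  (Fintype.card G : ℂ)⁻¹ * ∑ g : G, f₁ g * (starRingEnd ℂ) (f₂ g)

/-- `χ : G → ℂ` is a character of `G`. -/
def IsChar (G : Type) [Group G] (χ : G → ℂ) : Prop :=
  ∃ V : FDRep ℂ G, χ = V.character

/-- `ξ : G → ℂ` is an irreducible character of `G`. -/
def IsIrredChar (G : Type) [Group G] (ξ : G → ℂ) : Prop :=
  ∃ V : FDRep ℂ G, CategoryTheory.Simple V ∧ ξ = V.character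

/-- The superclass `[g]` of `g`, for the equivalence relation `R` whose classes are the
superclasses. -/
def superclass {G : Type} [Fintype G] (R : Setoid G) (g : G) : Finset G :=
  Finset.univ.filter fun k => R.r g k

/-- Superinduction of a function `φ : H → ℂ` to `G`:
`SInd_H^G(φ)(g) = (|G|/(|H|·|[g]|)) · Σ_{k∈[g]} φ⁰(k)`, where `φ⁰` extends `φ` by `0`. -/
def SInd (G : Type) [Group G] [Fintype G] (H : Subgroup G) (R : Setoid G)
    (φ : H → ℂ) : G → ℂ := fun g =>
  (Fintype.card G : ℂ) / ((Fintype.card H : ℂ) * ((superclass R g).card : ℂ)) *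
    ∑ k ∈ superclass R g, (if hk : k ∈ H then φ ⟨k, hk⟩ else 0)

/-! Multiplying `SInd φ` by a superclass function `ψ̄` is the same as averaging `φ⁰ ψ̄` over each
superclass (scaled by `|G|/|H|`), and averaging over the blocks of a partition preserves the total
sum over `G`; that sum is supported on `H`, where it is `∑_{h ∈ H} φ(h) ψ̄(h)`. -/

section Superclass

variable {G : Type} [Fintype G] (R : Setoid G)

theorem mem_superclass {g k : G} : k ∈ superclass R g ↔ R.r g k := by
  simp [superclass]

theorem superclass_eq_of_rel {g k : G} (hgk : R.r g k) : superclass R g = superclass R k := by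
  ext x
  simp only [mem_superclass]
  exact ⟨R.trans (R.symm hgk), R.trans hgk⟩

theorem filter_rel_eq_superclass (k : G) :
    (Finset.univ.filter fun g : G => R.r g k) = superclass R k := by
  ext g
  simp only [Finset.mem_filter, Finset.mem_univ, true_and, mem_superclass]
  exact ⟨R.symm, R.symm⟩

theorem superclass_card_ne_zero (g : G) : (superclass R g).card ≠ 0 :=
  Finset.card_ne_zero_of_mem ((mem_superclass R).2 (R.refl g))

theorem sum_superclass_average {K : Type*} [Field K] [CharZero K] (f : G → K) :
    ∑ g, ((superclass R g).card : K)⁻¹ * ∑ k ∈ superclass R g, f k = ∑ k, f k := by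
  have hswap : ∀ g, ((superclass R g).card : K)⁻¹ * ∑ k ∈ superclass R g, f k
      = ∑ k, if R.r g k then ((superclass R k).card : K)⁻¹ * f k else 0 := by
    intro g
    rw [Finset.mul_sum, ← Finset.sum_filter]
    refine Finset.sum_congr rfl fun k hk => ?_
    rw [superclass_eq_of_rel R (by simpa using hk)]
  simp_rw [hswap]
  rw [Finset.sum_comm]
  refine Finset.sum_congr rfl fun k _ => ?_
  rw [← Finset.sum_filter, Finset.sum_const, filter_rel_eq_superclass, nsmul_eq_mul,
    mul_inv_cancel_left₀ (Nat.cast_ne_zero.2 (superclass_card_ne_zero R k))]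

end Superclass

theorem sum_dite_mem_subgroup {G M : Type*} [Group G] [Fintype G] [AddCommMonoid M]
    (H : Subgroup G) (F : H → M) :
    ∑ k : G, (if hk : k ∈ H then F ⟨k, hk⟩ else 0) = ∑ h : H, F h := by
  rw [Finset.sum_dite, Finset.sum_const_zero, add_zero]
  exact Finset.sum_bij (fun x _ => ⟨x.1, (Finset.mem_filter.1 x.2).2⟩) (by simp) (by simp)
    (by simp) (by simp)

theorem SInd_mul_eq_average (G : Type) [Group G] [Fintype G] (H : Subgroup G) (R : Setoid G)
    (φ : H → ℂ) (ψ : G → ℂ) (hψ : ∀ g k : G, R.r g k → ψ g = ψ k) (g : G) :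
    SInd G H R φ g * ψ g = (Fintype.card G : ℂ) / Fintype.card H *
      (((superclass R g).card : ℂ)⁻¹ *
        ∑ k ∈ superclass R g, (if hk : k ∈ H then φ ⟨k, hk⟩ else 0) * ψ k) := by
  have hconst : ∑ k ∈ superclass R g, (if hk : k ∈ H then φ ⟨k, hk⟩ else 0) * ψ k
      = (∑ k ∈ superclass R g, if hk : k ∈ H then φ ⟨k, hk⟩ else 0) * ψ g := by
    rw [Finset.sum_mul]
    exact Finset.sum_congr rfl fun k hk => by rw [hψ g k ((mem_superclass R).1 hk)]
  rw [hconst, SInd, div_mul_eq_div_div, div_eq_mul_inv _ ((superclass R g).card : ℂ)]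
  ring

theorem stmt6_general (G : Type) [Group G] [Fintype G] (R : Setoid G)
    (H : Subgroup G) (φ : H → ℂ) (ψ : G → ℂ)
    (hψ : ∀ g k : G, R.r g k → ψ g = ψ k) :
    innerChar G (SInd G H R φ) ψ = innerChar H φ (fun h => ψ h) := by
  have hψ' : ∀ g k : G, R.r g k → starRingEnd ℂ (ψ g) = starRingEnd ℂ (ψ k) :=
    fun g k hgk => congrArg _ (hψ g k hgk)
  unfold innerChar
  simp_rw [SInd_mul_eq_average G H R φ _ hψ', ← Finset.mul_sum, sum_superclass_average,
    dite_mul, zero_mul, sum_dite_mem_subgroup H (fun h => φ h * starRingEnd ℂ (ψ h))]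
  field_simp

/-- Superinduction satisfies Frobenius reciprocity: if `H ≤ G` are finite groups, `G` carries
a supercharacter theory (with superclasses the classes of `R` and supercharacters `X`),
`φ : H → ℂ` is any function and `ψ : G → ℂ` is a superclass function, then
`⟨SInd_H^G(φ), ψ⟩ = ⟨φ, Res_H^G(ψ)⟩`. -/
theorem stmt6 (G : Type) [Group G] [Fintype G] (R : Setoid G) (X : Finset (G → ℂ))
    (c : (G → ℂ) → ℂ)
    (hchar : ∀ χ ∈ X, IsChar G χ)
    (hnz : ∀ χ ∈ X, χ ≠ 0)
    (horth : ∀ χ₁ ∈ X, ∀ χ₂ ∈ X, χ₁ ≠ χ₂ → innerChar G χ₁ χ₂ = 0)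
    (hcardeq : X.card = (Finset.univ.image fun g : G => superclass R g).card)
    (hconstant : ∀ χ ∈ X, ∀ g h : G, R.r g h → χ g = χ h)
    (hconstituent : ∀ ξ : G → ℂ, IsIrredChar G ξ → ∃! χ, χ ∈ X ∧ innerChar G χ ξ ≠ 0)
    (H : Subgroup G) (φ : H → ℂ) (ψ : G → ℂ)
    (hψ : ∀ g k : G, R.r g k → ψ g = ψ k) :
    innerChar G (SInd G H R φ) ψ = innerChar H φ (fun h => ψ h) :=
  stmt6_general G R H φ ψ hψ

end
end

section
/- Let λ ⊢ n and σ ∈ S_r with r ≤ n. In Young's orthogonal representation, the entry π^λ(σ)_{T,T'} vanishes whenever the skew parts of T and T' (the standard skew tableaux formed by entries > r) differ, and equals π^ν(σ)_{U,U'} when they coincide, where ν ⊢ r is the common shape of the restrictions U, U' of T, T' to entries ≤ r. -/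
/-!
An adjacent transposition `(k, k+1)` with `k < r` acts in Young's orthogonal form only through
the cells of `k` and `k+1`, so every `π^λ(σ)`, `σ ∈ S_r`, preserves the entries `> r` of a
tableau; this is the vanishing part. For a fixed skew part, restricting to the entries `≤ r`
is a bijection onto the standard tableaux of shape `ν`, under which the generator matrices of
`π^λ` and `π^ν` coincide (the contents of `k` and `k+1` are read from the same cells). Both
sides are multiplicative, and by the vanishing part the sum over intermediate tableaux in a
product may be restricted to those with the same skew part, so the identity passes from the
adjacent transpositions, which generate `S_r`, to all of `S_r`.
-/

open scoped Classical

noncomputable section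

/-- A standard Young tableau of shape `μ ⊢ n`: a listing of the cells of `μ`
(`pos i` is the cell containing the entry `i+1`) increasing along rows and columns. -/
structure SYT (μ : YoungDiagram) where
  pos : Fin μ.card → ℕ × ℕ
  inj : Function.Injective pos
  range_eq : ∀ c : ℕ × ℕ, (∃ i, pos i = c) ↔ c ∈ μ
  row_lt : ∀ a b, (pos a).1 = (pos b).1 → (pos a).2 < (pos b).2 → a < b
  col_lt : ∀ a b, (pos a).2 = (pos b).2 → (pos a).1 < (pos b).1 → a < b

/-- The content of a box `(i, j)` (row `i`, column `j`) is `j − i`. -/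
def content (c : ℕ × ℕ) : ℝ := (c.2 : ℝ) - (c.1 : ℝ)

/-- `ρ` is Young's orthogonal representation of `S_{|μ|}` for the shape `μ`, given entrywise
on the basis of standard Young tableaux: it is multiplicative, sends `1` to the identity
matrix, and on an adjacent transposition `(k, k+1)` (labels `a+1, b+1` with `b = a+1`) the
`(T, S)` entry is `1/d_k(T)` if `S = T`, `√(1 − 1/d_k(T)²)` if `S = (k, k+1)T`, and `0`
otherwise, where `d_k(T)` is the signed content distance between `k` and `k+1` in `T`. -/
def IsYoungOrthogonal (μ : YoungDiagram)
    (ρ : Equiv.Perm (Fin μ.card) → SYT μ → SYT μ → ℝ) : Prop :=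
  (∀ T S : SYT μ, ρ 1 T S = if T = S then 1 else 0) ∧
  (∀ σ τ : Equiv.Perm (Fin μ.card), ∀ T S : SYT μ,
    ρ (σ * τ) T S = ∑ᶠ U : SYT μ, ρ σ T U * ρ τ U S) ∧
  (∀ a b : Fin μ.card, (b : ℕ) = (a : ℕ) + 1 → ∀ T S : SYT μ,
    ρ (Equiv.swap a b) T S =
      if S = T then 1 / (content (T.pos a) - content (T.pos b))
      else if S.pos = T.pos ∘ (Equiv.swap a b) then
        Real.sqrt (1 - 1 / (content (T.pos a) - content (T.pos b)) ^ 2)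
      else 0)

namespace Equiv.Perm

variable {α β : Type*}

theorem viaEmbedding_one (ι : α ↪ β) : (1 : Perm α).viaEmbedding ι = 1 := by
  rw [← viaEmbeddingHom_apply, map_one]

theorem viaEmbedding_mul (ι : α ↪ β) (π τ : Perm α) :
    (π * τ).viaEmbedding ι = π.viaEmbedding ι * τ.viaEmbedding ι := by
  simp only [← viaEmbeddingHom_apply, map_mul]

theorem viaEmbedding_swap [DecidableEq α] [DecidableEq β] (ι : α ↪ β) (a b : α) :
    (swap a b).viaEmbedding ι = swap (ι a) (ι b) := by
  ext x
  by_cases hx : x ∈ Set.range ι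
  · obtain ⟨y, rfl⟩ := hx
    rw [viaEmbedding_apply, ι.injective.swap_apply]
  · rw [viaEmbedding_apply_of_notMem _ _ _ hx,
      swap_apply_of_ne_of_ne (fun h ↦ hx ⟨a, h.symm⟩) (fun h ↦ hx ⟨b, h.symm⟩)]

theorem mclosure_swap_adjacent (r : ℕ) :
    Submonoid.closure {π : Perm (Fin r) | ∃ a b : Fin r, (b : ℕ) = a + 1 ∧ swap a b = π} = ⊤ := by
  rcases r with _ | n
  · exact (Submonoid.eq_top_iff' _).2 fun π ↦ Subsingleton.elim π 1 ▸ one_mem _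
  · refine top_unique ((mclosure_swap_castSucc_succ n).ge.trans (Submonoid.closure_mono ?_))
    rintro _ ⟨i, rfl⟩
    exact ⟨i.castSucc, i.succ, rfl, rfl⟩

theorem viaEmbedding_castLEEmb_of_le {r m : ℕ} (h : r ≤ m) (π : Perm (Fin r)) {i : Fin m}
    (hi : r ≤ (i : ℕ)) : π.viaEmbedding (Fin.castLEEmb h) i = i :=
  viaEmbedding_apply_of_notMem _ _ _ fun ⟨j, hj⟩ ↦ by
    have : (j : ℕ) = i := congrArg Fin.val hj
    omega

end Equiv.Perm

theorem Fin.funext_castLE_of_le {α : Type*} {r m : ℕ} (h : r ≤ m) {f g : Fin m → α}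
    (hlow : f ∘ Fin.castLE h = g ∘ Fin.castLE h) (hhigh : ∀ i : Fin m, r ≤ (i : ℕ) → f i = g i) :
    f = g := by
  funext i
  by_cases hi : (i : ℕ) < r
  · exact congrFun hlow ⟨i, hi⟩
  · exact hhigh i (by omega)

namespace SYT

open Equiv

variable {μ lam ν : YoungDiagram} {r : ℕ}

theorem pos_injective : Function.Injective (pos : SYT μ → _) := by
  rintro ⟨⟩ ⟨⟩ h
  congr

-- Index `i` holds the entry `i + 1`, so this compares the entries `> r`.
def SameSkew (r : ℕ) (T T' : SYT μ) : Prop :=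
  ∀ i : Fin μ.card, r ≤ (i : ℕ) → T.pos i = T'.pos i

theorem SameSkew.refl (T : SYT μ) : T.SameSkew r T := fun _ _ ↦ rfl

theorem SameSkew.symm {T T' : SYT μ} (h : T.SameSkew r T') : T'.SameSkew r T :=
  fun i hi ↦ (h i hi).symm

theorem SameSkew.trans {T T' T'' : SYT μ} (h : T.SameSkew r T') (h' : T'.SameSkew r T'') :
    T.SameSkew r T'' :=
  fun i hi ↦ (h i hi).trans (h' i hi)

theorem sameSkew_of_pos_eq_comp_viaEmbedding (h : r ≤ μ.card) (π : Perm (Fin r))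
    {T T' : SYT μ} (hT' : T'.pos = T.pos ∘ π.viaEmbedding (Fin.castLEEmb h)) :
    T.SameSkew r T' := fun i hi ↦ by
  rw [hT', Function.comp_apply, Perm.viaEmbedding_castLEEmb_of_le h π hi]

def HasInitialShape (T : SYT lam) (ν : YoungDiagram) : Prop :=
  ∀ c, c ∈ ν ↔ ∃ i : Fin lam.card, (i : ℕ) < ν.card ∧ T.pos i = c

theorem hasInitialShape_of_pos_eq (h : ν.card ≤ lam.card) {T : SYT lam} {U : SYT ν}
    (hU : U.pos = T.pos ∘ Fin.castLE h) : T.HasInitialShape ν := fun c ↦ by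
  rw [← U.range_eq, hU]
  constructor
  · rintro ⟨j, rfl⟩
    exact ⟨_, j.2, rfl⟩
  · rintro ⟨i, hi, rfl⟩
    exact ⟨⟨i, hi⟩, rfl⟩

theorem HasInitialShape.pos_mem_iff {T : SYT lam} (hT : T.HasInitialShape ν) (i : Fin lam.card) :
    T.pos i ∈ ν ↔ (i : ℕ) < ν.card := by
  refine ⟨fun hi ↦ ?_, fun hi ↦ (hT _).2 ⟨i, hi, rfl⟩⟩
  obtain ⟨i', hi', he⟩ := (hT _).1 hi
  exact T.inj he ▸ hi'

theorem HasInitialShape.mem_of_mem {T : SYT lam} (hT : T.HasInitialShape ν) {c : ℕ × ℕ}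
    (hc : c ∈ ν) : c ∈ lam := by
  obtain ⟨i, -, rfl⟩ := (hT c).1 hc
  exact (T.range_eq _).1 ⟨i, rfl⟩

theorem SameSkew.exists_lt_pos_eq {T V : SYT μ} (hTV : T.SameSkew r V) {i : Fin μ.card}
    (hi : (i : ℕ) < r) : ∃ i' : Fin μ.card, (i' : ℕ) < r ∧ T.pos i' = V.pos i := by
  obtain ⟨i', hi'⟩ := (T.range_eq _).2 ((V.range_eq _).1 ⟨i, rfl⟩)
  refine ⟨i', ?_, hi'⟩
  by_contra hri'
  have := V.inj ((hTV i' (by omega)).symm.trans hi')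
  omega

theorem HasInitialShape.of_sameSkew {T V : SYT lam} (hT : T.HasInitialShape ν)
    (hTV : T.SameSkew ν.card V) : V.HasInitialShape ν := fun c ↦ by
  refine (hT c).trans ⟨fun ⟨i, hi, he⟩ ↦ ?_, fun ⟨i, hi, he⟩ ↦ ?_⟩
  · obtain ⟨i', hi', he'⟩ := hTV.symm.exists_lt_pos_eq hi
    exact ⟨i', hi', he'.trans he⟩
  · obtain ⟨i', hi', he'⟩ := hTV.exists_lt_pos_eq hi
    exact ⟨i', hi', he'.trans he⟩

def restrict (T : SYT lam) (h : ν.card ≤ lam.card) (hT : T.HasInitialShape ν) : SYT ν where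
  pos := T.pos ∘ Fin.castLE h
  inj := T.inj.comp (Fin.castLE_injective h)
  range_eq c := by
    rw [hT c]
    exact ⟨fun ⟨j, hj⟩ ↦ ⟨_, j.2, hj⟩, fun ⟨i, hi, hc⟩ ↦ ⟨⟨i, hi⟩, hc⟩⟩
  row_lt _ _ := T.row_lt _ _
  col_lt _ _ := T.col_lt _ _

def extendPos (T : SYT lam) (W : SYT ν) (i : Fin lam.card) : ℕ × ℕ :=
  if hi : (i : ℕ) < ν.card then W.pos ⟨i, hi⟩ else T.pos i

theorem extendPos_castLE (T : SYT lam) (W : SYT ν) (h : ν.card ≤ lam.card) (j : Fin ν.card) :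
    extendPos T W (Fin.castLE h j) = W.pos j :=
  dif_pos j.2

theorem extendPos_of_le (T : SYT lam) (W : SYT ν) {i : Fin lam.card} (hi : ν.card ≤ (i : ℕ)) :
    extendPos T W i = T.pos i :=
  dif_neg (by omega)

theorem HasInitialShape.extendPos_injective {T : SYT lam} (hT : T.HasInitialShape ν)
    (W : SYT ν) : Function.Injective (extendPos T W) := by
  intro a b hab
  unfold extendPos at hab
  split_ifs at hab with ha hb hb
  · exact Fin.ext (congrArg Fin.val (W.inj hab) :)
  · exact absurd ((hT.pos_mem_iff b).1 (hab ▸ (W.range_eq _).1 ⟨_, rfl⟩)) hb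
  · exact absurd ((hT.pos_mem_iff a).1 (hab ▸ (W.range_eq _).1 ⟨_, rfl⟩)) ha
  · exact T.inj hab

theorem HasInitialShape.exists_extendPos_eq_iff {T : SYT lam} (hT : T.HasInitialShape ν)
    (W : SYT ν) (h : ν.card ≤ lam.card) (c : ℕ × ℕ) : (∃ i, extendPos T W i = c) ↔ c ∈ lam := by
  refine ⟨?_, fun hc ↦ ?_⟩
  · rintro ⟨i, rfl⟩
    unfold extendPos
    split_ifs
    · exact hT.mem_of_mem ((W.range_eq _).1 ⟨_, rfl⟩)
    · exact (T.range_eq _).1 ⟨i, rfl⟩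
  · obtain ⟨i, rfl⟩ := (T.range_eq c).2 hc
    by_cases hi : (i : ℕ) < ν.card
    · obtain ⟨j, hj⟩ := (W.range_eq _).2 ((hT.pos_mem_iff i).2 hi)
      exact ⟨Fin.castLE h j, by rw [extendPos_castLE, hj]⟩
    · exact ⟨i, extendPos_of_le T W (by omega)⟩

theorem HasInitialShape.lt_of_extendPos {T : SYT lam} (hT : T.HasInitialShape ν) (W : SYT ν)
    (R : ℕ × ℕ → ℕ × ℕ → Prop) (hW : ∀ a b, R (W.pos a) (W.pos b) → a < b)
    (hTR : ∀ a b, R (T.pos a) (T.pos b) → a < b)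
    (a b : Fin lam.card) (hab : R (extendPos T W a) (extendPos T W b)) : a < b := by
  unfold extendPos at hab
  split_ifs at hab with ha hb hb
  · exact hW _ _ hab
  · exact Fin.lt_def.2 (by omega)
  · obtain ⟨i, hi, he⟩ := (hT _).1 ((W.range_eq _).1 ⟨⟨b, hb⟩, rfl⟩)
    have := Fin.lt_def.1 (hTR _ _ (he ▸ hab))
    omega
  · exact hTR _ _ hab

def extend (T : SYT lam) (W : SYT ν) (h : ν.card ≤ lam.card) (hT : T.HasInitialShape ν) :
    SYT lam where
  pos := extendPos T W
  inj := hT.extendPos_injective W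
  range_eq := hT.exists_extendPos_eq_iff W h
  row_lt a b h₁ h₂ := hT.lt_of_extendPos W (fun p q ↦ p.1 = q.1 ∧ p.2 < q.2)
    (fun a b h ↦ W.row_lt a b h.1 h.2) (fun a b h ↦ T.row_lt a b h.1 h.2) a b ⟨h₁, h₂⟩
  col_lt a b h₁ h₂ := hT.lt_of_extendPos W (fun p q ↦ p.2 = q.2 ∧ p.1 < q.1)
    (fun a b h ↦ W.col_lt a b h.1 h.2) (fun a b h ↦ T.col_lt a b h.1 h.2) a b ⟨h₁, h₂⟩

def sameSkewEquiv (T : SYT lam) (h : ν.card ≤ lam.card) (hT : T.HasInitialShape ν) :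
    {V : SYT lam // T.SameSkew ν.card V} ≃ SYT ν where
  toFun V := V.1.restrict h (hT.of_sameSkew V.2)
  invFun W := ⟨T.extend W h hT, fun _ hi ↦ (extendPos_of_le T W hi).symm⟩
  left_inv V := Subtype.ext <| pos_injective <|
    Fin.funext_castLE_of_le h (funext fun j ↦ extendPos_castLE T _ h j)
      fun i hi ↦ (extendPos_of_le T _ hi).trans (V.2 i hi)
  right_inv W := pos_injective <| funext fun j ↦ extendPos_castLE T W h j

theorem sameSkewEquiv_pos (T : SYT lam) (h : ν.card ≤ lam.card) (hT : T.HasInitialShape ν)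
    (V : {V : SYT lam // T.SameSkew ν.card V}) :
    (T.sameSkewEquiv h hT V).pos = V.1.pos ∘ Fin.castLE h :=
  rfl

theorem pos_eq_comp_viaEmbedding_iff (h : ν.card ≤ lam.card) {T T' : SYT lam} {U U' : SYT ν}
    (hTT' : T.SameSkew ν.card T') (hU : U.pos = T.pos ∘ Fin.castLE h)
    (hU' : U'.pos = T'.pos ∘ Fin.castLE h) (π : Perm (Fin ν.card)) :
    T'.pos = T.pos ∘ π.viaEmbedding (Fin.castLEEmb h) ↔ U'.pos = U.pos ∘ π := by
  have hπ : π.viaEmbedding (Fin.castLEEmb h) ∘ Fin.castLE h = Fin.castLE h ∘ π :=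
    funext fun j ↦ π.viaEmbedding_apply (Fin.castLEEmb h) j
  rw [hU, hU', Function.comp_assoc, ← hπ, ← Function.comp_assoc]
  refine ⟨fun h' ↦ h' ▸ rfl, fun h' ↦ Fin.funext_castLE_of_le h h' fun i hi ↦ ?_⟩
  rw [← hTT' i hi, Function.comp_apply, Perm.viaEmbedding_castLEEmb_of_le h π hi]

theorem eq_iff_of_sameSkew (h : ν.card ≤ lam.card) {T T' : SYT lam} {U U' : SYT ν}
    (hTT' : T.SameSkew ν.card T') (hU : U.pos = T.pos ∘ Fin.castLE h)
    (hU' : U'.pos = T'.pos ∘ Fin.castLE h) : T' = T ↔ U' = U := by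
  simpa [pos_injective.eq_iff, Perm.viaEmbedding_one] using
    pos_eq_comp_viaEmbedding_iff h hTT' hU hU' 1

end SYT

namespace IsYoungOrthogonal

open Equiv SYT

variable {μ lam ν : YoungDiagram} {r : ℕ}

theorem apply_viaEmbedding_swap {ρ : Perm (Fin μ.card) → SYT μ → SYT μ → ℝ}
    (hρ : IsYoungOrthogonal μ ρ) (h : r ≤ μ.card) {a b : Fin r} (hab : (b : ℕ) = a + 1)
    (T S : SYT μ) :
    ρ ((swap a b).viaEmbedding (Fin.castLEEmb h)) T S =
      if S = T then 1 / (content (T.pos (Fin.castLE h a)) - content (T.pos (Fin.castLE h b)))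
      else if S.pos = T.pos ∘ (swap a b).viaEmbedding (Fin.castLEEmb h) then
        Real.sqrt (1 - 1 /
          (content (T.pos (Fin.castLE h a)) - content (T.pos (Fin.castLE h b))) ^ 2)
      else 0 := by
  rw [Perm.viaEmbedding_swap]
  exact hρ.2.2 _ _ hab T S

theorem sameSkew_of_apply_ne_zero {ρ : Perm (Fin μ.card) → SYT μ → SYT μ → ℝ}
    (hρ : IsYoungOrthogonal μ ρ) (h : r ≤ μ.card) (π : Perm (Fin r)) {T T' : SYT μ}
    (hne : ρ (π.viaEmbedding (Fin.castLEEmb h)) T T' ≠ 0) : T.SameSkew r T' := by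
  have hπ : π ∈ Submonoid.closure _ := Perm.mclosure_swap_adjacent r ▸ Submonoid.mem_top π
  induction hπ using Submonoid.closure_induction generalizing T T' with
  | mem _ hπ =>
    obtain ⟨a, b, hab, rfl⟩ := hπ
    rw [hρ.apply_viaEmbedding_swap h hab] at hne
    split_ifs at hne with h₁ h₂
    · exact h₁ ▸ SameSkew.refl T'
    · exact sameSkew_of_pos_eq_comp_viaEmbedding h _ h₂
    · exact absurd rfl hne
  | one =>
    rw [Perm.viaEmbedding_one, hρ.1] at hne
    exact (ite_ne_right_iff.1 hne).1 ▸ SameSkew.refl T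
  | mul π τ _ _ ihπ ihτ =>
    rw [Perm.viaEmbedding_mul, hρ.2.1] at hne
    obtain ⟨V, hV⟩ : ∃ V, ρ (π.viaEmbedding (Fin.castLEEmb h)) T V *
        ρ (τ.viaEmbedding (Fin.castLEEmb h)) V T' ≠ 0 := by
      by_contra! h0
      simp [h0] at hne
    exact (ihπ (left_ne_zero_of_mul hV)).trans (ihτ (right_ne_zero_of_mul hV))

theorem apply_viaEmbedding_eq {ρlam : Perm (Fin lam.card) → SYT lam → SYT lam → ℝ}
    {ρν : Perm (Fin ν.card) → SYT ν → SYT ν → ℝ} (hlam : IsYoungOrthogonal lam ρlam)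
    (hν : IsYoungOrthogonal ν ρν) (h : ν.card ≤ lam.card) (π : Perm (Fin ν.card))
    {T T' : SYT lam} {U U' : SYT ν} (hTT' : T.SameSkew ν.card T')
    (hU : U.pos = T.pos ∘ Fin.castLE h) (hU' : U'.pos = T'.pos ∘ Fin.castLE h) :
    ρlam (π.viaEmbedding (Fin.castLEEmb h)) T T' = ρν π U U' := by
  have hπ : π ∈ Submonoid.closure _ := Perm.mclosure_swap_adjacent ν.card ▸ Submonoid.mem_top π
  induction hπ using Submonoid.closure_induction generalizing T T' U U' with
  | mem _ hπ =>
    obtain ⟨a, b, hab, rfl⟩ := hπ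
    rw [hlam.apply_viaEmbedding_swap h hab, hν.2.2 a b hab]
    simp only [eq_iff_of_sameSkew h hTT' hU hU', pos_eq_comp_viaEmbedding_iff h hTT' hU hU', hU,
      Function.comp_apply]
  | one =>
    rw [Perm.viaEmbedding_one, hlam.1, hν.1]
    exact if_congr (by rw [eq_comm, eq_iff_of_sameSkew h hTT' hU hU', eq_comm]) rfl rfl
  | mul π τ _ _ ihπ ihτ =>
    rw [Perm.viaEmbedding_mul, hlam.2.1, hν.2.1]
    let e := T.sameSkewEquiv h (hasInitialShape_of_pos_eq h hU)
    let f V :=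
      ρlam (π.viaEmbedding (Fin.castLEEmb h)) T V * ρlam (τ.viaEmbedding (Fin.castLEEmb h)) V T'
    calc ∑ᶠ V, f V
        = ∑ᶠ V : {V // T.SameSkew ν.card V}, f V := by
          rw [finsum_subtype_eq_finsum_cond]
          refine finsum_congr fun V ↦ ?_
          rw [finsum_eq_if]
          split_ifs with hV
          · rfl
          · exact mul_eq_zero_of_left
              (not_ne_iff.1 (mt (hlam.sameSkew_of_apply_ne_zero h π) hV)) _
      _ = ∑ᶠ V, ρν π U (e V) * ρν τ (e V) U' := finsum_congr fun V ↦
          congrArg₂ (· * ·) (ihπ V.2 hU (sameSkewEquiv_pos ..))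
            (ihτ (V.2.symm.trans hTT') (sameSkewEquiv_pos ..) hU')
      _ = ∑ᶠ W, ρν π U W * ρν τ W U' := finsum_comp_equiv e (f := fun W ↦ ρν π U W * ρν τ W U')

end IsYoungOrthogonal

/-- Let `λ ⊢ n` and `σ ∈ S_r` with `r ≤ n`.  In Young's orthogonal representation, the entry
`π^λ(σ)_{T,T'}` vanishes whenever the skew parts of `T` and `T'` (the standard skew tableaux
formed by the entries `> r`) differ, and equals `π^ν(σ)_{U,U'}` when they coincide, where
`ν ⊢ r` is the common shape of the restrictions `U, U'` of `T, T'` to entries `≤ r`. -/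
theorem stmt9 (ρ : (μ : YoungDiagram) → Equiv.Perm (Fin μ.card) → SYT μ → SYT μ → ℝ)
    (hρ : ∀ μ : YoungDiagram, IsYoungOrthogonal μ (ρ μ))
    (lam : YoungDiagram) (n r : ℕ) (hn : lam.card = n) (hrn : r ≤ n)
    (σ : Equiv.Perm (Fin r)) (T T' : SYT lam) :
    ((∃ i : Fin lam.card, r ≤ (i : ℕ) ∧ T.pos i ≠ T'.pos i) →
      ρ lam (σ.viaEmbedding (Fin.castLEEmb (show r ≤ lam.card by omega))) T T' = 0) ∧
    ((∀ i : Fin lam.card, r ≤ (i : ℕ) → T.pos i = T'.pos i) →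
      ∀ (ν : YoungDiagram) (hνr : ν.card = r) (U U' : SYT ν),
        (∀ j : Fin ν.card,
          U.pos j = T.pos (Fin.castLE (show r ≤ lam.card by omega) (Fin.cast hνr j))) →
        (∀ j : Fin ν.card,
          U'.pos j = T'.pos (Fin.castLE (show r ≤ lam.card by omega) (Fin.cast hνr j))) →
        ρ lam (σ.viaEmbedding (Fin.castLEEmb (show r ≤ lam.card by omega))) T T' =
          ρ ν ((finCongr hνr.symm).permCongr σ) U U') := by
  have h : r ≤ lam.card := hn ▸ hrn
  refine ⟨fun ⟨i, hi, hne⟩ ↦ by_contra fun h0 ↦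
    hne ((hρ lam).sameSkew_of_apply_ne_zero h σ h0 i hi), ?_⟩
  rintro hskew ν rfl U U' hU hU'
  simpa [← Equiv.Perm.one_def] using
    (hρ lam).apply_viaEmbedding_eq (hρ ν) h σ hskew (funext hU) (funext hU')

end
end

section
/- In the algebra ℂ[S_n], the sum over all sequences ((j_1,h),...,(j_k,h)) with k even, 1 ≤ j_1,...,j_k < h, such that the product (j_1,h)···(j_k,h) is the identity and |{j_1,...,j_k,h}| = k/2+1, for a fixed (k/2+1)-element support set D with maximum h, has cardinality Cat(k/2)·(k/2)!, where Cat denotes the Catalan numbers. -/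
/-!
Write a word `j₁ ⋯ j_k` in letters other than `h` for the permutation `(j₁ h) ⋯ (j_k h)`.
A letter occurring exactly once is moved by it, so if the product is trivial and the word has
length twice its number of letters, every letter occurs exactly twice. Such a word has trivial
product iff a stack that pushes each letter at its first occurrence and pops it at its second only
ever pops its top: the product of the unread part of the word always equals the product of the
stack. Cutting at the second occurrence of the first letter `a` writes the word as `a u a v`, with
`u` and `v` of the same kind on complementary sets of letters, so the number `N(m)` of such words
on `m` letters satisfies `N(m+1) = (m+1) ∑ⱼ (m choose j) N(j) N(m-j)`, which the Catalan
recursion solves by `N(m) = Cat(m) m!`.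
-/

namespace StarTransposition

open List Nat

variable {α : Type*}

section StarProd

variable [DecidableEq α]

def starProd (h : α) (l : List α) : Equiv.Perm α := (l.map (Equiv.swap · h)).prod

@[simp] lemma starProd_nil (h : α) : starProd h [] = 1 := rfl

@[simp] lemma starProd_cons (h a : α) (l : List α) :
    starProd h (a :: l) = Equiv.swap a h * starProd h l := rfl

@[simp] lemma starProd_append (h : α) (l₁ l₂ : List α) :
    starProd h (l₁ ++ l₂) = starProd h l₁ * starProd h l₂ := by
  simp [starProd]

@[simp] lemma starProd_ofFn (h : α) {k : ℕ} (f : Fin k → α) :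
    starProd h (ofFn f) = (ofFn fun i => Equiv.swap (f i) h).prod := by
  simp [starProd, map_ofFn, Function.comp_def]

lemma starProd_apply_of_notMem {h a : α} {l : List α} (ha : a ∉ l) (hah : a ≠ h) :
    starProd h l a = a := by
  induction l with
  | nil => rfl
  | cons b l ih =>
    rw [mem_cons, not_or] at ha
    simp [ih ha.2, Equiv.swap_apply_of_ne_of_ne ha.1 hah]

lemma starProd_apply_ne_of_count_eq_one {h x : α} {l : List α} (hl : h ∉ l)
    (hx : l.count x = 1) : starProd h l x ≠ x := by
  obtain ⟨p, q, rfl⟩ := append_of_mem (count_pos_iff.mp (by omega : 0 < l.count x))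
  have hxh : x ≠ h := by rintro rfl; simp at hl
  have hxp : x ∉ p := fun hm => by have := count_pos_iff.mpr hm; simp at hx; omega
  have hxq : x ∉ q := fun hm => by have := count_pos_iff.mpr hm; simp at hx; omega
  -- the occurrence of `x` sends it to `h`, which `starProd h p` cannot send back to `x`
  intro hfix
  simp only [starProd_append, starProd_cons, Equiv.Perm.mul_apply,
    starProd_apply_of_notMem hxq hxh, Equiv.swap_apply_left] at hfix
  exact hxh ((starProd h p).injective (hfix.trans (starProd_apply_of_notMem hxp hxh).symm)).symm

lemma two_le_count_of_starProd_eq_one {h x : α} {l : List α} (hl : h ∉ l)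
    (hprod : starProd h l = 1) (hx : x ∈ l) : 2 ≤ l.count x := by
  have := count_pos_iff.mpr hx
  by_contra hlt
  exact starProd_apply_ne_of_count_eq_one (x := x) hl (by omega) (by simp [hprod])

end StarProd

/-- `StackRun s w`: reading `w` with the stack `s` (top first) pushes every letter that is not on
the stack, pops the top when reading it for the last time, and ends with the empty stack. -/
inductive StackRun : List α → List α → Prop
  | nil : StackRun [] []
  | push {a : α} {s w : List α} : StackRun (a :: s) w → a ∉ s → StackRun s (a :: w)
  | pop {a : α} {s w : List α} : StackRun s w → a ∉ w → a ∉ s → StackRun (a :: s) (a :: w)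

namespace StackRun

variable {s t u w : List α}

lemma exists_append_of_append_singleton {b : α} (hw : StackRun (s ++ [b]) w) :
    ∃ u v, w = u ++ b :: v ∧ StackRun s u ∧ StackRun [] v := by
  generalize ht : s ++ [b] = t at hw
  induction hw generalizing s with
  | nil => simp at ht
  | @push a t w _ hat ih =>
    subst ht
    obtain ⟨u, v, rfl, hu, hv⟩ := ih (s := a :: s) rfl
    exact ⟨a :: u, v, rfl, push hu (by simp_all), hv⟩
  | @pop a t w hw haw hat ih =>
    cases s with
    | nil =>
      obtain ⟨rfl, rfl⟩ : b = a ∧ [] = t := by simpa using ht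
      exact ⟨[], w, rfl, nil, hw⟩
    | cons c s =>
      obtain ⟨rfl, rfl⟩ : c = a ∧ s ++ [b] = t := by simpa using ht
      obtain ⟨u, v, rfl, hu, hv⟩ := ih rfl
      exact ⟨_ :: u, v, rfl, pop hu (by simp_all) (by simp_all), hv⟩

lemma append (hu : StackRun s u) (hw : StackRun t w) (hd : u.Disjoint (t ++ w)) :
    StackRun (s ++ t) (u ++ w) := by
  induction hu with
  | nil => exact hw
  | @push a s u _ has ih =>
    refine push (ih fun x hx => hd (mem_cons_of_mem a hx)) ?_
    have := @hd a (mem_cons_self ..)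
    simp_all
  | @pop a s u _ hau has ih =>
    have := @hd a (mem_cons_self ..)
    exact pop (ih fun x hx => hd (mem_cons_of_mem a hx)) (by simp_all) (by simp_all)

variable [DecidableEq α]

lemma count_eq (hw : StackRun s w) (x : α) :
    w.count x = if x ∈ s then 1 else if x ∈ w then 2 else 0 := by
  induction hw with
  | nil => simp
  | @push a _ _ _ _ _ => by_cases hx : x = a <;> simp_all [eq_comm]
  | @pop a _ _ _ _ _ _ => by_cases hx : x = a <;> simp_all [eq_comm]

lemma starProd_eq (hw : StackRun s w) (h : α) : starProd h w = starProd h s := by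
  induction hw with
  | nil => rfl
  | push _ _ ih => simp [ih, ← mul_assoc]
  | pop _ _ _ ih => simp [ih]

lemma of_starProd_eq {h : α} (hs : s.Nodup) (hhs : h ∉ s) (hhw : h ∉ w)
    (hprod : starProd h w = starProd h s)
    (hcount : ∀ x, w.count x = if x ∈ s then 1 else if x ∈ w then 2 else 0) : StackRun s w := by
  induction w generalizing s with
  | nil =>
    cases s with
    | nil => exact nil
    | cons c s => simpa using hcount c
  | cons a w ih =>
    have hah : a ≠ h := by rintro rfl; simp at hhw
    by_cases has : a ∈ s
    · have haw : a ∉ w := count_eq_zero.mp (by simpa [has] using hcount a)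
      obtain ⟨c, s, rfl⟩ := exists_cons_of_ne_nil (ne_nil_of_mem has)
      rw [nodup_cons] at hs
      have hch : c ≠ h := by rintro rfl; simp at hhs
      -- both products send their first letter to `h`
      have hah' : starProd h (a :: w) a = h := by simp [starProd_apply_of_notMem haw hah]
      have hch' : starProd h (c :: s) c = h := by simp [starProd_apply_of_notMem hs.1 hch]
      obtain rfl : a = c := (starProd h (c :: s)).injective ((hprod ▸ hah').trans hch'.symm)
      refine pop (ih hs.2 (by simp_all) (by simp_all) (by simpa using hprod) fun x => ?_) haw hs.1
      by_cases hx : x = a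
      · subst hx; simp [hs.1, haw, count_eq_zero]
      · simpa [count_cons, Ne.symm hx, hx] using hcount x
    · refine push (ih (nodup_cons.mpr ⟨has, hs⟩) (by simp [hhs, hah.symm]) (by simp_all)
        (by simp [← hprod, ← mul_assoc]) fun x => ?_) has
      by_cases hx : x = a
      · subst hx; simpa [has] using hcount x
      · simpa [count_cons, Ne.symm hx, hx] using hcount x

end StackRun

lemma sum_powerset_catalan_mul_factorial (s : Finset α) :
    ∑ T ∈ s.powerset, catalan T.card * T.card ! * (catalan (s.card - T.card) * (s.card - T.card)!)
      = s.card ! * catalan (s.card + 1) := by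
  rw [Finset.sum_powerset_apply_card
      (fun j => catalan j * j ! * (catalan (s.card - j) * (s.card - j)!)),
    catalan_succ, Fin.sum_univ_eq_sum_range (fun i => catalan i * catalan (s.card - i)),
    Finset.mul_sum]
  refine Finset.sum_congr rfl fun j hj => ?_
  rw [smul_eq_mul,
    ← Nat.choose_mul_factorial_mul_factorial (Nat.lt_succ_iff.mp (Finset.mem_range.mp hj))]
  ring

section StackWords

variable [DecidableEq α]

open StackRun in
lemma stackRun_nil_cons_iff {a : α} {w : List α} :
    StackRun [] (a :: w) ↔
      ∃ u v, w = u ++ a :: v ∧ StackRun [] u ∧ StackRun [] v ∧ a ∉ u ∧ a ∉ v ∧ u.Disjoint v := by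
  constructor
  · rintro (_ | ⟨hw, -⟩)
    obtain ⟨u, v, rfl, hu, hv⟩ := exists_append_of_append_singleton (s := []) hw
    have hca := hw.count_eq a
    simp only [count_append, count_cons_self, mem_singleton, if_true] at hca
    have hau : a ∉ u := count_eq_zero.mp (by omega)
    have hav : a ∉ v := count_eq_zero.mp (by omega)
    refine ⟨u, v, rfl, hu, hv, hau, hav, fun x hxu hxv => ?_⟩
    have hxa : x ≠ a := by rintro rfl; exact hau hxu
    have hcu := hu.count_eq x
    have hcv := hv.count_eq x
    have hcx := hw.count_eq x
    simp [hxu, hxv, hxa, count_cons] at hcu hcv hcx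
    omega
  · rintro ⟨u, v, rfl, hu, hv, hau, hav, huv⟩
    refine push (s := []) ?_ (not_mem_nil)
    have hd : u.Disjoint ([a] ++ a :: v) := fun x hxu hx => by
      have hxa : x ≠ a := by rintro rfl; exact hau hxu
      simp_all [huv hxu]
    simpa using hu.append (pop hv hav (not_mem_nil)) hd

lemma stackRun_nil_iff {h : α} {w : List α} (hw : h ∉ w) :
    StackRun [] w ↔ starProd h w = 1 ∧ w.length = 2 * w.toFinset.card := by
  rw [← sum_toFinset_count_eq_length]
  constructor
  · intro hrun
    refine ⟨by simpa using hrun.starProd_eq h, ?_⟩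
    rw [Finset.sum_congr rfl (g := fun _ => 2) fun x hx => by simp_all [hrun.count_eq x],
      Finset.sum_const, smul_eq_mul, mul_comm]
  · rintro ⟨hprod, hlen⟩
    have hle : ∀ x ∈ w.toFinset, 2 ≤ w.count x :=
      fun x hx => two_le_count_of_starProd_eq_one hw hprod (mem_toFinset.mp hx)
    rw [mul_comm, ← smul_eq_mul, ← Finset.sum_const, eq_comm,
      Finset.sum_eq_sum_iff_of_le hle] at hlen
    refine StackRun.of_starProd_eq nodup_nil (not_mem_nil) hw (by simpa using hprod) fun x => ?_
    by_cases hx : x ∈ w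
    · simp [hx, ← hlen x (mem_toFinset.mpr hx)]
    · simp [hx, count_eq_zero]

open Classical in
noncomputable def stackWords (S : Finset α) : Finset (List α) :=
  {w ∈ (2 • S.val).lists.toFinset | StackRun [] w}

lemma mem_stackWords {S : Finset α} {w : List α} :
    w ∈ stackWords S ↔ StackRun [] w ∧ w.toFinset = S := by
  simp only [stackWords, Finset.mem_filter, Multiset.mem_toFinset, Multiset.mem_lists_iff]
  constructor
  · rintro ⟨hS, hw⟩
    exact ⟨hw, by simpa using (congrArg Multiset.toFinset hS).symm⟩
  · rintro ⟨hw, rfl⟩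
    refine ⟨Multiset.ext.mpr fun x => ?_, hw⟩
    by_cases hx : x ∈ w <;> simp [hx, hw.count_eq x, count_eq_one_of_mem (nodup_dedup w)]

lemma mem_stackWords_iff_starProd {h : α} {S : Finset α} (hS : h ∉ S) {w : List α} :
    w ∈ stackWords S ↔ w.toFinset = S ∧ w.length = 2 * S.card ∧ starProd h w = 1 := by
  rw [mem_stackWords]
  constructor
  · rintro ⟨hw, rfl⟩
    have := (stackRun_nil_iff (h := h) (by simpa using hS)).mp hw
    exact ⟨rfl, this.2, this.1⟩
  · rintro ⟨rfl, hlen, hprod⟩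
    exact ⟨(stackRun_nil_iff (by simpa using hS)).mpr ⟨hprod, hlen⟩, rfl⟩

lemma stackWords_empty : stackWords (∅ : Finset α) = {[]} := by
  ext w
  simp only [mem_stackWords, toFinset_eq_empty_iff, Finset.mem_singleton]
  exact ⟨And.right, by rintro rfl; exact ⟨.nil, rfl⟩⟩

lemma cons_mem_stackWords_iff {S : Finset α} {a : α} {w : List α} :
    a :: w ∈ stackWords S ↔ a ∈ S ∧ ∃ T ⊆ S.erase a, ∃ u ∈ stackWords T,
      ∃ v ∈ stackWords (S.erase a \ T), w = u ++ a :: v := by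
  rw [mem_stackWords, stackRun_nil_cons_iff]
  constructor
  · rintro ⟨⟨u, v, rfl, hu, hv, hau, hav, huv⟩, rfl⟩
    refine ⟨by simp, u.toFinset, ?_, u, mem_stackWords.mpr ⟨hu, rfl⟩, v,
      mem_stackWords.mpr ⟨hv, ?_⟩, rfl⟩
    · intro x; simp; grind
    · ext x; have := @huv x; simp; grind
  · rintro ⟨haS, T, hT, u, huT, v, hvT, rfl⟩
    obtain ⟨hu, rfl⟩ := mem_stackWords.mp huT
    obtain ⟨hv, hvT⟩ := mem_stackWords.mp hvT
    rw [Finset.ext_iff] at hvT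
    have hT' := fun x => @hT x
    simp only [mem_toFinset, Finset.mem_erase, Finset.mem_sdiff] at hvT hT'
    refine ⟨⟨u, v, rfl, hu, hv, ?_, ?_, fun x => ?_⟩, ?_⟩
    · grind
    · grind
    · grind
    · ext x; simp; grind

lemma card_stackWords_of_nonempty {S : Finset α} (hS : S.Nonempty) :
    (stackWords S).card = ∑ a ∈ S, ∑ T ∈ (S.erase a).powerset,
      (stackWords T).card * (stackWords (S.erase a \ T)).card := by
  set X := S.sigma fun a => (S.erase a).powerset.sigma fun T =>
    stackWords T ×ˢ stackWords (S.erase a \ T)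
  let glue : (_ : α) × (_ : Finset α) × List α × List α → List α :=
    fun p => p.1 :: (p.2.2.1 ++ p.1 :: p.2.2.2)
  have himage : stackWords S = X.image glue := by
    ext w
    cases w with
    | nil => simp [mem_stackWords, glue, hS.ne_empty.symm]
    | cons a w => simp [cons_mem_stackWords_iff, X, glue, and_assoc, @eq_comm _ w]
  have hinj : Set.InjOn glue X := by
    rintro ⟨a, T, u, v⟩ hp ⟨a', T', u', v'⟩ hq heq
    simp only [X, Finset.coe_sigma, Set.mem_sigma_iff, Finset.mem_coe, Finset.mem_powerset,
      Finset.mem_product, mem_stackWords] at hp hq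
    obtain ⟨-, hT, ⟨-, rfl⟩, -, hvT⟩ := hp
    obtain ⟨-, -, ⟨-, rfl⟩, -, -⟩ := hq
    obtain ⟨rfl, heq⟩ := cons_eq_cons.mp heq
    have hau : a ∉ u := fun h => by simpa using hT (mem_toFinset.mpr h)
    have hav : a ∉ v := fun h => by simpa [hvT] using mem_toFinset.mpr h
    obtain ⟨rfl, -, rfl⟩ := (append_cons_inj_of_notMem hau hav).mp heq
    rfl
  rw [himage, Finset.card_image_of_injOn hinj, Finset.card_sigma]
  simp only [Finset.card_sigma, Finset.card_product]

theorem card_stackWords (S : Finset α) : (stackWords S).card = catalan S.card * S.card ! := by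
  induction hn : S.card using Nat.strong_induction_on generalizing S with
  | _ n ih =>
  rcases S.eq_empty_or_nonempty with rfl | hS
  · subst hn; simp [stackWords_empty]
  obtain ⟨m, rfl⟩ : ∃ m, n = m + 1 := Nat.exists_eq_succ_of_ne_zero (hn ▸ hS.card_pos.ne')
  have hsum : ∀ a ∈ S, ∑ T ∈ (S.erase a).powerset,
      (stackWords T).card * (stackWords (S.erase a \ T)).card = m ! * catalan (m + 1) := by
    intro a ha
    have hm : (S.erase a).card = m := by rw [Finset.card_erase_of_mem ha, hn]; rfl
    rw [← hm, ← sum_powerset_catalan_mul_factorial]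
    refine Finset.sum_congr rfl fun T hT => ?_
    have hTs := Finset.mem_powerset.mp hT
    have hTm := Finset.card_le_card hTs
    rw [ih _ (by omega) T rfl, ih _ (by omega) _ (Finset.card_sdiff_of_subset hTs)]
  rw [card_stackWords_of_nonempty hS, Finset.sum_congr rfl hsum, Finset.sum_const, hn, smul_eq_mul,
    Nat.factorial_succ]
  ring

end StackWords

lemma toFinset_ofFn_eq_erase_iff [LinearOrder α] {k : ℕ} {f : Fin k → α} {D : Finset α} {h : α}
    (hmem : h ∈ D) (hmax : ∀ x ∈ D, x ≤ h) :
    ((∀ i, f i < h) ∧ ∀ x, (x = h ∨ ∃ i, f i = x) ↔ x ∈ D) ↔ (ofFn f).toFinset = D.erase h := by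
  simp only [Finset.ext_iff, mem_toFinset, mem_ofFn, Finset.mem_erase]
  constructor
  · rintro ⟨hlt, hD⟩ x
    constructor
    · rintro ⟨i, rfl⟩
      exact ⟨(hlt i).ne, (hD _).mp (Or.inr ⟨i, rfl⟩)⟩
    · rintro ⟨hxh, hxD⟩
      exact ((hD x).mpr hxD).resolve_left hxh
  · intro hf
    have hrange : ∀ i, f i ≠ h ∧ f i ∈ D := fun i => (hf (f i)).mp ⟨i, rfl⟩
    refine ⟨fun i => (hmax _ (hrange i).2).lt_of_ne (hrange i).1, fun x => ⟨?_, fun hxD => ?_⟩⟩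
    · rintro (rfl | ⟨i, rfl⟩)
      exacts [hmem, (hrange i).2]
    · by_cases hxh : x = h
      exacts [Or.inl hxh, Or.inr ((hf x).mpr ⟨hxh, hxD⟩)]

end StarTransposition

lemma Nat.card_subtype_ofFn_mem {β : Type*} {k : ℕ} (W : Finset (List β))
    (hW : ∀ w ∈ W, w.length = k) : Nat.card {f : Fin k → β // List.ofFn f ∈ W} = W.card := by
  rw [← Nat.card_eq_finsetCard]
  refine Nat.card_congr (Equiv.ofBijective (fun f => ⟨List.ofFn f.1, f.2⟩) ⟨?_, ?_⟩)
  · exact fun f g hfg => Subtype.ext (List.ofFn_injective (congrArg Subtype.val hfg))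
  · rintro ⟨w, hw⟩
    obtain rfl := hW w hw
    exact ⟨⟨fun i => w[i], by simpa using hw⟩, by simp⟩

theorem stmt14_general (k : ℕ) (hk : Even k) (D : Finset ℕ) (h : ℕ)
    (hcard : D.card = k / 2 + 1) (hmem : h ∈ D) (hmax : ∀ x ∈ D, x ≤ h) :
    Nat.card {f : Fin k → ℕ //
        (∀ i, f i < h) ∧
        (∀ x, (x = h ∨ ∃ i, f i = x) ↔ x ∈ D) ∧
        (List.ofFn fun i => Equiv.swap (f i) h).prod = 1} =
      catalan (k / 2) * (k / 2).factorial := by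
  set S := D.erase h
  have hhS : h ∉ S := Finset.notMem_erase h D
  have hS : S.card = k / 2 := by simp [S, Finset.card_erase_of_mem hmem, hcard]
  have hk2 : k = 2 * S.card := by rw [hS]; exact (Nat.two_mul_div_two_of_even hk).symm
  have hiff : ∀ f : Fin k → ℕ, ((∀ i, f i < h) ∧ (∀ x, (x = h ∨ ∃ i, f i = x) ↔ x ∈ D) ∧
      (List.ofFn fun i => Equiv.swap (f i) h).prod = 1) ↔
        List.ofFn f ∈ StarTransposition.stackWords S := by
    intro f
    rw [StarTransposition.mem_stackWords_iff_starProd hhS,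
      ← StarTransposition.toFinset_ofFn_eq_erase_iff hmem hmax, List.length_ofFn, ← hk2,
      StarTransposition.starProd_ofFn]
    simp only [true_and, and_assoc]
  have hlen : ∀ w ∈ StarTransposition.stackWords S, w.length = k := fun w hw =>
    ((StarTransposition.mem_stackWords_iff_starProd hhS).mp hw).2.1.trans hk2.symm
  rw [Nat.card_congr (Equiv.subtypeEquivRight hiff), Nat.card_subtype_ofFn_mem _ hlen,
    StarTransposition.card_stackWords, hS]

/-- In `ℂ[S_n]`, the number of sequences `((j_1,h), ..., (j_k,h))` of transpositions with
`k` even and `1 ≤ j_1, ..., j_k < h`, whose product `(j_1,h)···(j_k,h)` is the identity and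
whose support `{j_1, ..., j_k, h}` is a fixed `(k/2+1)`-element set `D ⊆ {1, ..., n}` with
maximum `h`, equals `Cat(k/2)·(k/2)!`, where `Cat` denotes the Catalan numbers. -/
theorem stmt14 (n k : ℕ) (hk : Even k) (D : Finset ℕ) (h : ℕ)
    (hD : ∀ x ∈ D, 1 ≤ x ∧ x ≤ n)
    (hcard : D.card = k / 2 + 1) (hmem : h ∈ D) (hmax : ∀ x ∈ D, x ≤ h) :
    Nat.card {f : Fin k → ℕ //
        (∀ i, f i < h) ∧
        (∀ x, (x = h ∨ ∃ i, f i = x) ↔ x ∈ D) ∧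
        (List.ofFn fun i => Equiv.swap (f i) h).prod = 1} =
      catalan (k / 2) * (k / 2).factorial :=
  stmt14_general k hk D h hcard hmem hmax
end

section
/- Let Γ be the set of positive measures μ on the triangle Δ = {(x,y) ∈ [0,1]² : y ≥ x} with total mass at most 1 and subuniform marginals. Then for every μ ∈ Γ, ∫_Δ (y−x) dμ(x,y) ≤ 1/4. -/
/-!
Write `y - x = ∫ 𝟙[x < t ≤ y] dt` and swap the integrals: the integral equals
`∫ μ {x < t ≤ y} dt`. A point with `x < t ≤ y` has `x ∈ [0, t]` and `y ∈ [t, 1]`, so by the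
subuniform marginals the integrand is at most `min t (1 - t)`, whose integral is `1/4`.
-/

open MeasureTheory

/-- The triangle `Δ = {(x, y) ∈ [0,1]² : y ≥ x}`. -/
def triangleSet : Set (ℝ × ℝ) := {p | 0 ≤ p.1 ∧ p.1 ≤ p.2 ∧ p.2 ≤ 1}

theorem measurableSet_triangleSet : MeasurableSet triangleSet :=
  (measurableSet_le measurable_const measurable_fst).inter
    ((measurableSet_le measurable_fst measurable_snd).inter
      (measurableSet_le measurable_snd measurable_const))

theorem lintegral_ofReal_sub_eq_lintegral_measure {α : Type*} [MeasurableSpace α]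
    (μ : Measure α) [SFinite μ] {f g : α → ℝ} (hf : Measurable f) (hg : Measurable g) :
    ∫⁻ a, ENNReal.ofReal (g a - f a) ∂μ = ∫⁻ t, μ {a | f a < t ∧ t ≤ g a} := by
  set S : Set (α × ℝ) := {q | f q.1 < q.2 ∧ q.2 ≤ g q.1}
  have hS : MeasurableSet S :=
    (measurableSet_lt (hf.comp measurable_fst) measurable_snd).inter
      (measurableSet_le measurable_snd (hg.comp measurable_fst))
  calc ∫⁻ a, ENNReal.ofReal (g a - f a) ∂μ = ∫⁻ a, volume (Prod.mk a ⁻¹' S) ∂μ := by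
        congr 1 with a
        rw [show Prod.mk a ⁻¹' S = Set.Ioc (f a) (g a) from rfl, Real.volume_Ioc]
    _ = μ.prod volume S := (Measure.prod_apply hS).symm
    _ = ∫⁻ t, μ {a | f a < t ∧ t ≤ g a} := Measure.prod_apply_symm hS

theorem integral_min_one_sub : ∫ t in (0 : ℝ)..1, min t (1 - t) = 1 / 4 := by
  have hleft : Set.EqOn (fun t : ℝ => min t (1 - t)) (fun t => t) (Set.uIcc 0 (1 / 2)) := by
    intro t ht
    rw [Set.uIcc_of_le (by norm_num)] at ht
    exact min_eq_left (by linarith [ht.2])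
  have hright : Set.EqOn (fun t : ℝ => min t (1 - t)) (fun t => 1 - t) (Set.uIcc (1 / 2) 1) := by
    intro t ht
    rw [Set.uIcc_of_le (by norm_num)] at ht
    exact min_eq_right (by linarith [ht.1])
  have hcont : Continuous fun t : ℝ => min t (1 - t) := by fun_prop
  rw [← intervalIntegral.integral_add_adjacent_intervals (b := 1 / 2)
    (hcont.intervalIntegrable _ _) (hcont.intervalIntegrable _ _),
    intervalIntegral.integral_congr hleft, intervalIntegral.integral_congr hright,
    intervalIntegral.integral_sub intervalIntegrable_const intervalIntegral.intervalIntegrable_id]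
  norm_num [integral_id]

theorem lintegral_ofReal_min_one_sub :
    ∫⁻ t, ENNReal.ofReal (min t (1 - t)) = ENNReal.ofReal (1 / 4) := by
  have hsupp : (fun t : ℝ => ENNReal.ofReal (min t (1 - t))).support ⊆ Set.Ioc 0 1 := by
    intro t ht
    have h := ENNReal.ofReal_pos.1 (pos_iff_ne_zero.2 ht)
    exact ⟨(lt_min_iff.1 h).1, by linarith [(lt_min_iff.1 h).2]⟩
  have hcont : Continuous fun t : ℝ => min t (1 - t) := by fun_prop
  have hnonneg : ∀ᵐ t : ℝ ∂volume.restrict (Set.Ioc 0 1), 0 ≤ min t (1 - t) :=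
    ae_restrict_of_forall_mem measurableSet_Ioc fun t ht => le_min ht.1.le (by linarith [ht.2])
  calc ∫⁻ t, ENNReal.ofReal (min t (1 - t))
      = ∫⁻ t in Set.Ioc 0 1, ENNReal.ofReal (min t (1 - t)) :=
        (setLIntegral_eq_of_support_subset hsupp).symm
    _ = ENNReal.ofReal (∫ t in Set.Ioc 0 1, min t (1 - t)) :=
        (ofReal_integral_eq_lintegral_ofReal hcont.integrableOn_Ioc hnonneg).symm
    _ = ENNReal.ofReal (1 / 4) := by
        rw [← intervalIntegral.integral_of_le zero_le_one, integral_min_one_sub]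

section SubuniformMarginals

variable {μ : Measure (ℝ × ℝ)}

theorem measure_triangleSet_le_one
    (hmx : ∀ a b : ℝ, 0 ≤ a → a ≤ b → b ≤ 1 →
      μ ({p : ℝ × ℝ | a ≤ p.1 ∧ p.1 ≤ b} ∩ triangleSet) ≤ ENNReal.ofReal (b - a)) :
    μ triangleSet ≤ 1 := by
  have h := hmx 0 1 le_rfl zero_le_one le_rfl
  have hΔ : triangleSet ⊆ {p : ℝ × ℝ | 0 ≤ p.1 ∧ p.1 ≤ 1} := fun p hp => ⟨hp.1, hp.2.1.trans hp.2.2⟩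
  rwa [sub_zero, ENNReal.ofReal_one, Set.inter_eq_right.2 hΔ] at h

theorem measure_fst_lt_le_snd_inter_triangleSet_le
    (hmx : ∀ a b : ℝ, 0 ≤ a → a ≤ b → b ≤ 1 →
      μ ({p : ℝ × ℝ | a ≤ p.1 ∧ p.1 ≤ b} ∩ triangleSet) ≤ ENNReal.ofReal (b - a))
    (hmy : ∀ a b : ℝ, 0 ≤ a → a ≤ b → b ≤ 1 →
      μ ({p : ℝ × ℝ | a ≤ p.2 ∧ p.2 ≤ b} ∩ triangleSet) ≤ ENNReal.ofReal (b - a))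
    (t : ℝ) :
    μ ({p : ℝ × ℝ | p.1 < t ∧ t ≤ p.2} ∩ triangleSet) ≤ ENNReal.ofReal (min t (1 - t)) := by
  by_cases ht : t ∈ Set.Ioc 0 1
  · rw [ENNReal.ofReal_min]
    refine le_min ?_ ?_
    · calc _ ≤ μ ({p : ℝ × ℝ | 0 ≤ p.1 ∧ p.1 ≤ t} ∩ triangleSet) :=
            measure_mono <| by rintro p ⟨hp, hΔ⟩; exact ⟨⟨hΔ.1, hp.1.le⟩, hΔ⟩
        _ ≤ ENNReal.ofReal t := by simpa using hmx 0 t le_rfl ht.1.le ht.2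
    · calc _ ≤ μ ({p : ℝ × ℝ | t ≤ p.2 ∧ p.2 ≤ 1} ∩ triangleSet) :=
            measure_mono <| by rintro p ⟨hp, hΔ⟩; exact ⟨⟨hp.2, hΔ.2.2⟩, hΔ⟩
        _ ≤ ENNReal.ofReal (1 - t) := hmy t 1 ht.1.le ht.2 le_rfl
  · have hempty : {p : ℝ × ℝ | p.1 < t ∧ t ≤ p.2} ∩ triangleSet = ∅ :=
      Set.eq_empty_of_forall_notMem fun p ⟨hp, hΔ⟩ =>
        ht ⟨hΔ.1.trans_lt hp.1, hp.2.trans hΔ.2.2⟩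
    simp [hempty]

end SubuniformMarginals

theorem stmt17_general (μ : Measure (ℝ × ℝ))
    (hmx : ∀ a b : ℝ, 0 ≤ a → a ≤ b → b ≤ 1 →
      μ ({p : ℝ × ℝ | a ≤ p.1 ∧ p.1 ≤ b} ∩ triangleSet) ≤ ENNReal.ofReal (b - a))
    (hmy : ∀ a b : ℝ, 0 ≤ a → a ≤ b → b ≤ 1 →
      μ ({p : ℝ × ℝ | a ≤ p.2 ∧ p.2 ≤ b} ∩ triangleSet) ≤ ENNReal.ofReal (b - a)) :
    ∫ p in triangleSet, (p.2 - p.1) ∂μ ≤ 1 / 4 := by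
  -- Tonelli needs `μ.restrict triangleSet` to be s-finite; the `x`-marginal bound makes it finite.
  have : IsFiniteMeasure (μ.restrict triangleSet) :=
    isFiniteMeasure_restrict.2 ((measure_triangleSet_le_one hmx).trans_lt ENNReal.one_lt_top).ne
  have hlayer : ∫⁻ p in triangleSet, ENNReal.ofReal (p.2 - p.1) ∂μ
      = ∫⁻ t, μ ({p : ℝ × ℝ | p.1 < t ∧ t ≤ p.2} ∩ triangleSet) := by
    rw [lintegral_ofReal_sub_eq_lintegral_measure _ measurable_fst measurable_snd]
    exact lintegral_congr fun t => Measure.restrict_apply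
      ((measurableSet_lt measurable_fst measurable_const).inter
        (measurableSet_le measurable_const measurable_snd))
  rw [integral_eq_lintegral_of_nonneg_ae
    (ae_restrict_of_forall_mem measurableSet_triangleSet fun p hp => sub_nonneg.2 hp.2.1)
    (by fun_prop), hlayer]
  refine ENNReal.toReal_le_of_le_ofReal (by norm_num) ?_
  calc _ ≤ ∫⁻ t, ENNReal.ofReal (min t (1 - t)) :=
        lintegral_mono (measure_fst_lt_le_snd_inter_triangleSet_le hmx hmy)
    _ = ENNReal.ofReal (1 / 4) := lintegral_ofReal_min_one_sub

/-- Let `Γ` be the set of positive measures `μ` on the triangle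
`Δ = {(x,y) ∈ [0,1]² : y ≥ x}` with total mass at most `1` and subuniform marginals.
Then for every `μ ∈ Γ`, `∫_Δ (y−x) dμ(x,y) ≤ 1/4`. -/
theorem stmt17 (μ : Measure (ℝ × ℝ))
    (hsupp : μ triangleSetᶜ = 0)
    (hmass : μ Set.univ ≤ 1)
    (hmx : ∀ a b : ℝ, 0 ≤ a → a ≤ b → b ≤ 1 →
      μ ({p : ℝ × ℝ | a ≤ p.1 ∧ p.1 ≤ b} ∩ triangleSet) ≤ ENNReal.ofReal (b - a))
    (hmy : ∀ a b : ℝ, 0 ≤ a → a ≤ b → b ≤ 1 →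
      μ ({p : ℝ × ℝ | a ≤ p.2 ∧ p.2 ≤ b} ∩ triangleSet) ≤ ENNReal.ofReal (b - a)) :
    ∫ p in triangleSet, (p.2 - p.1) ∂μ ≤ 1 / 4 :=
  stmt17_general μ hmx hmy
end

section
/- Let μ be a subprobability on [0,1/2]×[1/2,1] with uniform marginals (x-marginal the Lebesgue measure on [0,1/2], y-marginal the Lebesgue measure on [1/2,1]) such that ∫∫ 1[x₁<x₂<y₁<y₂] dμ(x₁,y₁) dμ(x₂,y₂) = 0. Then μ equals the pushforward of Lebesgue measure on [0,1/2] under x ↦ (x, 1−x); equivalently, μ([0,a]×[1−b,1]) = min(a,b) for all a,b ∈ [0,1/2]. -/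
/-!
Write `L c = {x ≤ c}` and `U c = {y ≥ 1 - c}`; by the marginal conditions both have mass `c`,
so `L c \ U c` and `U c \ L c` have equal mass. Almost every point satisfies `x < 1/2 ≤ y`, so a
point of `L c \ U c` followed by a point of `U c \ L c` is a crossing pair: the product of the two
masses vanishes, hence both do. Thus `L c = U c` almost everywhere for every `c`, i.e. `μ` lives on
the anti-diagonal, and `μ([0,a]×[1-b,1])` is `μ (L a) = a` if `a ≤ b` and `μ (U b) = b` otherwise.
-/

open MeasureTheory Set

def crossingSet : Set ((ℝ × ℝ) × (ℝ × ℝ)) :=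
  {q | q.1.1 < q.2.1 ∧ q.2.1 < q.1.2 ∧ q.1.2 < q.2.2}

theorem fst_Iic_ae_eq_snd_Ici_of_crossing_null {μ : Measure (ℝ × ℝ)} [IsFiniteMeasure μ]
    {m a s : ℝ} (hsep : ∀ᵐ p ∂μ, p.1 < m ∧ m ≤ p.2) (hcross : μ.prod μ crossingSet = 0)
    (hbal : μ (Prod.fst ⁻¹' Iic a) = μ (Prod.snd ⁻¹' Ici s)) :
    Prod.fst ⁻¹' Iic a =ᵐ[μ] Prod.snd ⁻¹' Ici s := by
  set L := Prod.fst ⁻¹' Iic a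
  set U := Prod.snd ⁻¹' Ici s
  have hLU : μ (L \ U) = μ (U \ L) := by
    have hL := measure_inter_add_sdiff L (measurable_snd (measurableSet_Ici (a := s))) (μ := μ)
    have hU := measure_inter_add_sdiff U (measurable_fst (measurableSet_Iic (a := a))) (μ := μ)
    rw [inter_comm, hbal, ← hU] at hL
    exact (ENNReal.add_right_inj (measure_ne_top μ _)).1 hL
  have hsub : (L \ U ∩ {p | p.1 < m ∧ m ≤ p.2}) ×ˢ (U \ L ∩ {p | p.1 < m ∧ m ≤ p.2}) ⊆
      crossingSet := by
    rintro ⟨⟨x₁, y₁⟩, ⟨x₂, y₂⟩⟩ ⟨⟨⟨hx₁, hy₁⟩, -, hm₁⟩, ⟨⟨hy₂, hx₂⟩, hm₂, -⟩⟩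
    simp only [L, U, mem_preimage, mem_Iic, mem_Ici, not_le] at *
    exact ⟨hx₂.trans_le' hx₁, hm₂.trans_le hm₁, hy₁.trans_le hy₂⟩
  have hprod : μ (L \ U) * μ (U \ L) = 0 := by
    rw [← measure_inter_conull hsep, ← measure_inter_conull (s := U \ L) hsep,
      ← Measure.prod_prod]
    exact measure_mono_null hsub hcross
  refine ae_eq_set.2 ?_
  rcases mul_eq_zero.1 hprod with h | h
  · exact ⟨h, hLU ▸ h⟩
  · exact ⟨hLU ▸ h, h⟩

/-- Let `μ` be a subprobability on `[0,1/2]×[1/2,1]` with uniform marginals (the `x`-marginal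
is Lebesgue measure on `[0,1/2]`, the `y`-marginal is Lebesgue measure on `[1/2,1]`) such
that `∫∫ 1[x₁<x₂<y₁<y₂] dμ(x₁,y₁) dμ(x₂,y₂) = 0`.  Then `μ` equals the pushforward of
Lebesgue measure on `[0,1/2]` under `x ↦ (x, 1−x)`; equivalently,
`μ([0,a]×[1−b,1]) = min(a,b)` for all `a, b ∈ [0,1/2]`. -/
theorem stmt18 (μ : Measure (ℝ × ℝ))
    (hmass : μ Set.univ ≤ 1)
    (hsupp : μ (Set.Icc (0 : ℝ) (1 / 2) ×ˢ Set.Icc (1 / 2 : ℝ) 1)ᶜ = 0)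
    (hmx : ∀ a b : ℝ, 0 ≤ a → a ≤ b → b ≤ 1 / 2 →
      μ {p : ℝ × ℝ | a ≤ p.1 ∧ p.1 ≤ b} = ENNReal.ofReal (b - a))
    (hmy : ∀ a b : ℝ, 1 / 2 ≤ a → a ≤ b → b ≤ 1 →
      μ {p : ℝ × ℝ | a ≤ p.2 ∧ p.2 ≤ b} = ENNReal.ofReal (b - a))
    (hcross : (μ.prod μ)
      {q : (ℝ × ℝ) × (ℝ × ℝ) | q.1.1 < q.2.1 ∧ q.2.1 < q.1.2 ∧ q.1.2 < q.2.2} = 0) :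
    ∀ a b : ℝ, 0 ≤ a → a ≤ 1 / 2 → 0 ≤ b → b ≤ 1 / 2 →
      μ (Set.Icc 0 a ×ˢ Set.Icc (1 - b) 1) = ENNReal.ofReal (min a b) := by
  have : IsFiniteMeasure μ := ⟨hmass.trans_lt ENNReal.one_lt_top⟩
  have hrect : ∀ᵐ p ∂μ, p ∈ Icc (0 : ℝ) (1 / 2) ×ˢ Icc (1 / 2 : ℝ) 1 := mem_ae_iff.2 hsupp
  have hhalf : μ {p : ℝ × ℝ | 1 / 2 ≤ p.1 ∧ p.1 ≤ 1 / 2} = 0 := by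
    simpa using hmx (1 / 2) (1 / 2) (by norm_num) le_rfl le_rfl
  have hsep : ∀ᵐ p ∂μ, p.1 < 1 / 2 ∧ 1 / 2 ≤ p.2 := by
    filter_upwards [hrect, measure_eq_zero_iff_ae_notMem.1 hhalf] with p hp hp'
    exact ⟨lt_of_le_of_ne hp.1.2 fun h => hp' ⟨h.ge, h.le⟩, hp.2.1⟩
  have hlow : ∀ c, 0 ≤ c → c ≤ 1 / 2 → μ (Prod.fst ⁻¹' Iic c) = ENNReal.ofReal c := by
    intro c h₀ h₁
    refine (measure_congr ?_).trans ((hmx 0 c le_rfl h₀ h₁).trans (by rw [sub_zero]))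
    filter_upwards [hrect] with p hp
    exact propext ⟨fun h => ⟨hp.1.1, h⟩, And.right⟩
  have hhigh : ∀ c, 0 ≤ c → c ≤ 1 / 2 → μ (Prod.snd ⁻¹' Ici (1 - c)) = ENNReal.ofReal c := by
    intro c h₀ h₁
    refine (measure_congr ?_).trans
      ((hmy (1 - c) 1 (by linarith) (by linarith) le_rfl).trans (by rw [sub_sub_cancel]))
    filter_upwards [hrect] with p hp
    exact propext ⟨fun h => ⟨h, hp.2.2⟩, And.left⟩
  have hdiag : ∀ c, 0 ≤ c → c ≤ 1 / 2 → ∀ᵐ p ∂μ, (p.1 ≤ c ↔ 1 - c ≤ p.2) := fun c h₀ h₁ =>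
    (fst_Iic_ae_eq_snd_Ici_of_crossing_null hsep hcross
      ((hlow c h₀ h₁).trans (hhigh c h₀ h₁).symm)).mono fun _ h => iff_of_eq h
  intro a b ha₀ ha₁ hb₀ hb₁
  rcases le_total a b with hab | hab
  · rw [min_eq_left hab, ← hlow a ha₀ ha₁]
    refine measure_congr ?_
    filter_upwards [hrect, hdiag a ha₀ ha₁] with p hp hpa
    exact propext ⟨fun h => h.1.2, fun h => ⟨⟨hp.1.1, h⟩, by linarith [hpa.1 h], hp.2.2⟩⟩
  · rw [min_eq_right hab, ← hhigh b hb₀ hb₁]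
    refine measure_congr ?_
    filter_upwards [hrect, hdiag b hb₀ hb₁] with p hp hpb
    exact propext ⟨fun h => h.2.1, fun h => ⟨⟨hp.1.1, (hpb.2 h).trans hab⟩, h, hp.2.2⟩⟩
end
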